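/- Let b_0, …, b_{m−1} ≥ 0, ε > 0, and γ > 0, and suppose positive reals λ̃_1, …, λ̃_m with λ̃_i ≥ γ satisfy, for every index j, Σ_{k=0}^{m−1} (b_k / C(m, m−k)) · e_{m−k}(1/λ̃ with index j omitted) ≤ 1. Set λ'_i = λ̃_i + γ. Then there exists ε' > 0, depending only on m, the b_k, and γ (and not on the λ̃_i), such that for every index j, Σ_{k=0}^{m−1} (b_k / C(m, m−k)) · e_{m−k}(1/λ' with index j omitted) ≤ 1 − ε'. -/

import Mathlib

/-!
Put `u i = γ / λ̃ i ∈ (0, 1]`, so that `1 / λ̃ i = γ⁻¹ u i` and `1 / λ' i = γ⁻¹ u i / (1 + u i)`.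
After rescaling, both cone sums are nonnegative combinations `∑ w_t P_t` of monomials `P_t` in
the `u i`. Since `u / (1 + u) ≤ u - u² / 2` on `[0, 1]`, each monomial drops quadratically:
`P'_t ≤ P_t - P_t² / 2`. By Cauchy–Schwarz `(∑ w P)² ≤ (∑ w) (∑ w P²)`, and `B - a B² ≤ 1 - a`
for `B ≤ 1`, `a ≤ 1/2` then gives slack `1 / (2 (W + 1))`, where the total weight `W` does not
depend on `λ̃` or on the omitted index.
-/

/-- `k`-th elementary symmetric polynomial of `x` over the index set `s`. -/
def esymFin {m : ℕ} (s : Finset (Fin m)) (k : ℕ) (x : Fin m → ℝ) : ℝ :=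
  ∑ t ∈ s.powersetCard k, ∏ i ∈ t, x i

open Finset

lemma esymFin_const_mul {m : ℕ} (s : Finset (Fin m)) (k : ℕ) (a : ℝ) (x : Fin m → ℝ) :
    esymFin s k (fun i => a * x i) = a ^ k * esymFin s k x := by
  simp only [esymFin, mul_sum]
  refine sum_congr rfl fun t ht => ?_
  rw [prod_mul_distrib, prod_const, (mem_powersetCard.mp ht).2]

lemma sum_mul_esymFin_eq_sum_sigma {κ : Type*} [Fintype κ] {m : ℕ} (s : Finset (Fin m))
    (d : κ → ℕ) (c : κ → ℝ) (x : Fin m → ℝ) :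
    ∑ k, c k * esymFin s (d k) x =
      ∑ p ∈ univ.sigma fun k => s.powersetCard (d k), c p.1 * ∏ i ∈ p.2, x i := by
  simp only [esymFin, mul_sum, sum_sigma]

lemma div_one_add_self_le {a : ℝ} (h0 : 0 ≤ a) (h1 : a ≤ 1) : a / (1 + a) ≤ a - a ^ 2 / 2 := by
  rw [div_le_iff₀ (by linarith)]
  nlinarith

lemma prod_div_one_add_self_le {ι : Type*} [DecidableEq ι] {t : Finset ι} {u : ι → ℝ}
    (ht : t.Nonempty) (h0 : ∀ i ∈ t, 0 ≤ u i) (h1 : ∀ i ∈ t, u i ≤ 1) :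
    ∏ i ∈ t, u i / (1 + u i) ≤ ∏ i ∈ t, u i - (∏ i ∈ t, u i) ^ 2 / 2 := by
  obtain ⟨i₀, hi₀⟩ := ht
  have h0' : ∀ i ∈ t.erase i₀, 0 ≤ u i := fun i hi => h0 i (mem_of_mem_erase hi)
  have hR0 : 0 ≤ ∏ i ∈ t.erase i₀, u i := prod_nonneg h0'
  have hR1 : ∏ i ∈ t.erase i₀, u i ≤ 1 :=
    prod_le_one h0' fun i hi => h1 i (mem_of_mem_erase hi)
  have hrest : ∏ i ∈ t.erase i₀, u i / (1 + u i) ≤ ∏ i ∈ t.erase i₀, u i :=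
    prod_le_prod (fun i hi => div_nonneg (h0' i hi) (by linarith [h0' i hi]))
      fun i hi => div_le_self (h0' i hi) (by linarith [h0' i hi])
  have ha0 := h0 i₀ hi₀
  have ha1 := h1 i₀ hi₀
  rw [← mul_prod_erase t _ hi₀, ← mul_prod_erase t u hi₀]
  calc u i₀ / (1 + u i₀) * ∏ i ∈ t.erase i₀, u i / (1 + u i)
      ≤ (u i₀ - u i₀ ^ 2 / 2) * ∏ i ∈ t.erase i₀, u i :=
        mul_le_mul (div_one_add_self_le ha0 ha1) hrest
          (prod_nonneg fun i hi => div_nonneg (h0' i hi) (by linarith [h0' i hi]))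
          (by nlinarith)
    _ ≤ u i₀ * ∏ i ∈ t.erase i₀, u i - (u i₀ * ∏ i ∈ t.erase i₀, u i) ^ 2 / 2 := by
        nlinarith [mul_nonneg (mul_nonneg ha0 ha0) (mul_nonneg hR0 (sub_nonneg.2 hR1))]

lemma sub_mul_sq_le_one_sub {a B : ℝ} (ha0 : 0 ≤ a) (ha : 2 * a ≤ 1) (hB : B ≤ 1) :
    B - a * B ^ 2 ≤ 1 - a := by
  nlinarith [mul_nonneg (sub_nonneg.2 hB) (by nlinarith : 0 ≤ 1 - a * (1 + B))]

lemma sum_mul_le_one_sub_of_le_sub_sq {ι : Type*} (s : Finset ι) {w P P' : ι → ℝ} {W : ℝ}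
    (hw : ∀ i ∈ s, 0 ≤ w i) (hW : ∑ i ∈ s, w i ≤ W)
    (hP' : ∀ i ∈ s, P' i ≤ P i - P i ^ 2 / 2) (h1 : ∑ i ∈ s, w i * P i ≤ 1) :
    ∑ i ∈ s, w i * P' i ≤ 1 - 1 / (2 * (W + 1)) := by
  set B := ∑ i ∈ s, w i * P i
  set Q := ∑ i ∈ s, w i * P i ^ 2
  have hQ : 0 ≤ Q := sum_nonneg fun i hi => mul_nonneg (hw i hi) (sq_nonneg _)
  have hW1 : 0 < W + 1 := by linarith [sum_nonneg hw]
  have hCS : B ^ 2 ≤ (W + 1) * Q :=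
    calc B ^ 2 ≤ (∑ i ∈ s, w i) * Q :=
          sum_sq_le_sum_mul_sum_of_sq_le_mul s hw
            (fun i hi => mul_nonneg (hw i hi) (sq_nonneg _)) fun i _ => le_of_eq (by ring)
      _ ≤ (W + 1) * Q := by gcongr; linarith
  calc ∑ i ∈ s, w i * P' i
      ≤ ∑ i ∈ s, w i * (P i - P i ^ 2 / 2) :=
        sum_le_sum fun i hi => mul_le_mul_of_nonneg_left (hP' i hi) (hw i hi)
    _ = B - Q / 2 := by simp only [mul_sub, sum_sub_distrib, mul_div_assoc', ← sum_div, B, Q]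
    _ ≤ B - 1 / (2 * (W + 1)) * B ^ 2 := by
        rw [one_div_mul_eq_div, sub_le_sub_iff_left, div_le_div_iff₀ (by positivity) two_pos]
        nlinarith
    _ ≤ 1 - 1 / (2 * (W + 1)) :=
        sub_mul_sq_le_one_sub (by positivity)
          (by rw [mul_one_div, div_le_one (by positivity)]; linarith [sum_nonneg hw]) h1

theorem stmt_15_general (m : ℕ) (b : Fin m → ℝ) (hb : ∀ k, 0 ≤ b k)
    (γ : ℝ) (hγ : 0 < γ) :
    ∃ ε' > (0 : ℝ), ∀ lam : Fin m → ℝ, (∀ i, 0 < lam i) → (∀ i, γ ≤ lam i) →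
      (∀ j : Fin m, ∑ k : Fin m,
          b k / (m.choose (m - (k : ℕ)) : ℝ) *
            esymFin (Finset.univ.erase j) (m - (k : ℕ)) (fun i => 1 / lam i) ≤ 1) →
      ∀ j : Fin m, ∑ k : Fin m,
          b k / (m.choose (m - (k : ℕ)) : ℝ) *
            esymFin (Finset.univ.erase j) (m - (k : ℕ)) (fun i => 1 / (lam i + γ)) ≤ 1 - ε' := by
  set w : Fin m → ℝ := fun k => b k / (m.choose (m - (k : ℕ)) : ℝ) * γ⁻¹ ^ (m - (k : ℕ))
  have hw : ∀ k, 0 ≤ w k := fun k => by have := hb k; positivity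
  set W := ∑ k : Fin m, ((m - 1).choose (m - (k : ℕ)) : ℝ) * w k
  have hW : 0 ≤ W := sum_nonneg fun k _ => mul_nonneg (Nat.cast_nonneg _) (hw k)
  refine ⟨1 / (2 * (W + 1)), by positivity, fun lam _ hlam hcone j => ?_⟩
  set u : Fin m → ℝ := fun i => γ / lam i
  have hlam0 : ∀ i, 0 < lam i := fun i => hγ.trans_le (hlam i)
  have hrescale : ∀ x : Fin m → ℝ, ∑ k : Fin m, b k / (m.choose (m - (k : ℕ)) : ℝ) *
      esymFin (univ.erase j) (m - (k : ℕ)) (fun i => γ⁻¹ * x i) =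
      ∑ p ∈ univ.sigma fun k : Fin m => (univ.erase j).powersetCard (m - (k : ℕ)),
        w p.1 * ∏ i ∈ p.2, x i := fun x => by
    simp only [esymFin_const_mul, ← mul_assoc]
    exact sum_mul_esymFin_eq_sum_sigma _ _ w x
  have hx : (fun i => 1 / lam i) = fun i => γ⁻¹ * u i := by
    funext i; simp only [u]; field_simp
  have hy : (fun i => 1 / (lam i + γ)) = fun i => γ⁻¹ * (u i / (1 + u i)) := by
    funext i
    have := (hlam0 i).ne'
    simp only [u]; field_simp
  have hcone_j := hcone j
  rw [hx, hrescale] at hcone_j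
  rw [hy, hrescale]
  refine sum_mul_le_one_sub_of_le_sub_sq _ (fun p _ => hw p.1) (le_of_eq ?_) (fun p hp => ?_)
    hcone_j
  · simp [sum_sigma, card_powersetCard, W]
  · obtain ⟨-, hcard⟩ := mem_powersetCard.mp (mem_sigma.mp hp).2
    exact prod_div_one_add_self_le (card_pos.mp (by omega))
      (fun i _ => div_nonneg hγ.le (hlam0 i).le) fun i _ => (div_le_one (hlam0 i)).2 (hlam i)

/-- Uniform improvement of the cone condition: if positive reals `λ̃_i ≥ γ` satisfy the
non-strict cone condition, then `λ'_i = λ̃_i + γ` satisfy it with slack `ε'` depending only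
on `m`, the `b_k` and `γ`. -/
theorem stmt_15 (m : ℕ) (hm : 1 ≤ m) (b : Fin m → ℝ) (hb : ∀ k, 0 ≤ b k)
    (ε γ : ℝ) (hε : 0 < ε) (hγ : 0 < γ) :
    ∃ ε' > (0 : ℝ), ∀ lam : Fin m → ℝ, (∀ i, 0 < lam i) → (∀ i, γ ≤ lam i) →
      (∀ j : Fin m, ∑ k : Fin m,
          b k / (m.choose (m - (k : ℕ)) : ℝ) *
            esymFin (Finset.univ.erase j) (m - (k : ℕ)) (fun i => 1 / lam i) ≤ 1) →
      ∀ j : Fin m, ∑ k : Fin m,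
          b k / (m.choose (m - (k : ℕ)) : ℝ) *
            esymFin (Finset.univ.erase j) (m - (k : ℕ)) (fun i => 1 / (lam i + γ)) ≤ 1 - ε' :=
  stmt_15_general m b hb γ hγ
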